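/- arXiv:1702.01959 — 3 statements merged into one kernel-verified Lean document; each statement's English description precedes it below -/
import Mathlib

section
/- Let T' be a p×q matrix with nonnegative real entries, and let T be the (p+1)×(q+1) nonnegative matrix whose top-left p×q block equals T', whose last column has all entries 0 except that its last entry is 1, and whose last row has all entries 0 except that its last entry is 1. Then r₊(T) = r₊(T') + 1. -/
open Matrix

theorem rank_vecMulVec_le' {α β : Type*} [Fintype α] [Fintype β]
    (u : α → ℝ) (v : β → ℝ) : (Matrix.vecMulVec u v).rank ≤ 1 := by
  rw [Matrix.vecMulVec_eq (Fin 1)]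
  exact le_trans (Matrix.rank_mul_le_left _ _)
    (le_trans (Matrix.rank_le_card_width _) (by simp))

theorem exists_of_rank_le_one' {α β : Type*} [Fintype α] [Fintype β] [DecidableEq β]
    (M : Matrix α β ℝ) (h : M.rank ≤ 1) :
    ∃ u v, M = Matrix.vecMulVec u v := by
  have h' : Module.finrank ℝ (LinearMap.range M.mulVecLin) ≤ 1 := h
  obtain ⟨v₀, hv₀⟩ := finrank_le_one_iff.mp h'
  choose c hc using fun j : β =>
    hv₀ ⟨M.mulVec (Pi.single j 1), LinearMap.mem_range_self _ _⟩
  refine ⟨(v₀ : α → ℝ), c, ?_⟩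
  ext i j
  have := congrArg (fun w : LinearMap.range M.mulVecLin => (w : α → ℝ) i) (hc j)
  simp only [Matrix.mulVec_single, mul_one] at this
  simpa [Matrix.vecMulVec_apply, mul_comm] using this.symm

theorem exists_decomp' {α β : Type*} [Fintype α] [Fintype β]
    (M : Matrix α β ℝ) (hM : ∀ i j, 0 ≤ M i j) :
    ∃ r : ℕ, ∃ R : Fin r → Matrix α β ℝ,
      (∀ ℓ i j, 0 ≤ R ℓ i j) ∧ (∀ ℓ, (R ℓ).rank ≤ 1) ∧ M = ∑ ℓ, R ℓ := by
  classical
  obtain e := (Fintype.equivFin (α × β)).symm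
  refine ⟨Fintype.card (α × β),
    fun ℓ => Matrix.vecMulVec (Pi.single (e ℓ).1 (M (e ℓ).1 (e ℓ).2)) (Pi.single (e ℓ).2 1),
    ?_, fun ℓ => rank_vecMulVec_le' _ _, ?_⟩
  · intro ℓ i j
    simp only [Matrix.vecMulVec_apply, Pi.single_apply]
    split_ifs <;> simp [hM]
  · ext i j
    rw [Matrix.sum_apply]
    rw [Fintype.sum_equiv e _
      (fun x : α × β => (if i = x.1 then M x.1 x.2 else 0) * (if j = x.2 then 1 else 0))
      (fun ℓ => by simp [Matrix.vecMulVec_apply, Pi.single_apply])]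
    simp [Fintype.sum_prod_type, ite_mul, mul_ite, Finset.sum_ite_eq]

/-- The nonnegative rank of a matrix `M` with nonnegative real entries: the smallest `r`
such that `M` is a sum of `r` nonnegative matrices each of rank at most one. -/
noncomputable def nnegRank {α β : Type*} [Fintype α] [Fintype β] (M : Matrix α β ℝ) : ℕ :=
  sInf { r : ℕ | ∃ R : Fin r → Matrix α β ℝ,
      (∀ ℓ i j, 0 ≤ R ℓ i j) ∧ (∀ ℓ, (R ℓ).rank ≤ 1) ∧ M = ∑ ℓ, R ℓ }

/-- If `T` consists of the nonnegative block `T'` together with a last row and last column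
that are zero except for a common last entry `1`, then `r₊(T) = r₊(T') + 1`. -/
theorem nnegRank_pyramid_slack {p q : ℕ}
    (T' : Matrix (Fin p) (Fin q) ℝ) (hT' : ∀ i j, 0 ≤ T' i j)
    (T : Matrix (Fin (p + 1)) (Fin (q + 1)) ℝ)
    (hT : ∀ i j, T i j =
      if h1 : (i : ℕ) < p then
        (if h2 : (j : ℕ) < q then T' ⟨i, h1⟩ ⟨j, h2⟩ else 0)
      else (if (j : ℕ) < q then 0 else 1)) :
    nnegRank T = nnegRank T' + 1 := by
  classical
  have hTnn : ∀ i j, 0 ≤ T i j := by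
    intro i j; rw [hT]; split_ifs <;> first | exact hT' _ _ | norm_num
  have hne' : ({ r : ℕ | ∃ R : Fin r → Matrix (Fin p) (Fin q) ℝ,
      (∀ ℓ i j, 0 ≤ R ℓ i j) ∧ (∀ ℓ, (R ℓ).rank ≤ 1) ∧ T' = ∑ ℓ, R ℓ }).Nonempty := by
    obtain ⟨r, R, h⟩ := exists_decomp' T' hT'
    exact ⟨r, R, h⟩
  have hne : ({ r : ℕ | ∃ R : Fin r → Matrix (Fin (p+1)) (Fin (q+1)) ℝ,
      (∀ ℓ i j, 0 ≤ R ℓ i j) ∧ (∀ ℓ, (R ℓ).rank ≤ 1) ∧ T = ∑ ℓ, R ℓ }).Nonempty := by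
    obtain ⟨r, R, h⟩ := exists_decomp' T hTnn
    exact ⟨r, R, h⟩
  -- Upper bound
  have hub : nnegRank T ≤ nnegRank T' + 1 := by
    obtain ⟨R', hnn', hrk', hsum'⟩ : nnegRank T' ∈ { r : ℕ | ∃ R : Fin r → Matrix (Fin p) (Fin q) ℝ,
        (∀ ℓ i j, 0 ≤ R ℓ i j) ∧ (∀ ℓ, (R ℓ).rank ≤ 1) ∧ T' = ∑ ℓ, R ℓ } := Nat.sInf_mem hne'
    choose u v huv using fun ℓ => exists_of_rank_le_one' (R' ℓ) (hrk' ℓ)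
    set R : Fin (nnegRank T' + 1) → Matrix (Fin (p+1)) (Fin (q+1)) ℝ :=
      Fin.snoc
        (fun ℓ => Matrix.vecMulVec (fun i => if h : (i:ℕ) < p then u ℓ ⟨i,h⟩ else 0)
                                   (fun j => if h : (j:ℕ) < q then v ℓ ⟨j,h⟩ else 0))
        (Matrix.vecMulVec (fun i => if (i:ℕ) < p then 0 else 1)
                          (fun j => if (j:ℕ) < q then 0 else 1)) with hR
    apply Nat.sInf_le
    refine ⟨R, ?_, ?_, ?_⟩
    · intro ℓ i j
      refine Fin.lastCases ?_ (fun ℓ => ?_) ℓ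
      · simp only [hR, Fin.snoc_last, Matrix.vecMulVec_apply]
        split_ifs <;> norm_num
      · simp only [hR, Fin.snoc_castSucc, Matrix.vecMulVec_apply]
        split_ifs with h1 h2
        · have : u ℓ ⟨i,h1⟩ * v ℓ ⟨j,h2⟩ = R' ℓ ⟨i,h1⟩ ⟨j,h2⟩ := by
            rw [huv ℓ, Matrix.vecMulVec_apply]
          rw [this]; exact hnn' ℓ _ _
        all_goals simp
    · intro ℓ
      refine Fin.lastCases ?_ (fun ℓ => ?_) ℓ
      · simp only [hR, Fin.snoc_last]; exact rank_vecMulVec_le' _ _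
      · simp only [hR, Fin.snoc_castSucc]; exact rank_vecMulVec_le' _ _
    · ext i j
      rw [Matrix.sum_apply, Fin.sum_univ_castSucc]
      simp only [hR, Fin.snoc_castSucc, Fin.snoc_last, Matrix.vecMulVec_apply]
      rw [hT]
      by_cases h1 : (i:ℕ) < p
      · by_cases h2 : (j:ℕ) < q
        · have key : T' ⟨i,h1⟩ ⟨j,h2⟩ = ∑ ℓ, u ℓ ⟨i,h1⟩ * v ℓ ⟨j,h2⟩ := by
            conv_lhs => rw [hsum']
            rw [Matrix.sum_apply]
            exact Finset.sum_congr rfl fun ℓ _ => by rw [huv ℓ, Matrix.vecMulVec_apply]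
          simp only [dif_pos h1, dif_pos h2, if_pos h1, zero_mul, add_zero]
          exact key
        · simp [h1, h2]
      · simp [h1]
  -- Lower bound
  have hlb : nnegRank T' + 1 ≤ nnegRank T := by
    have main : ∀ n (R : Fin n → Matrix (Fin (p+1)) (Fin (q+1)) ℝ),
        (∀ ℓ i j, 0 ≤ R ℓ i j) → (∀ ℓ, (R ℓ).rank ≤ 1) → T = ∑ ℓ, R ℓ →
        nnegRank T' + 1 ≤ n := by
      intro n R hnn hrk hsum
      have hll : ∑ ℓ, R ℓ (Fin.last p) (Fin.last q) = 1 := by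
        have := hT (Fin.last p) (Fin.last q)
        simp only [Fin.val_last, lt_irrefl, dif_neg, if_neg, not_lt_of_ge (le_refl p),
          not_lt_of_ge (le_refl q)] at this
        rw [← Matrix.sum_apply, ← hsum, this]
        simp
      obtain ⟨ℓ₀, hℓ₀⟩ : ∃ ℓ₀, 0 < R ℓ₀ (Fin.last p) (Fin.last q) := by
        by_contra h
        push_neg at h
        have : ∑ ℓ, R ℓ (Fin.last p) (Fin.last q) = 0 :=
          Finset.sum_eq_zero fun ℓ _ => le_antisymm (h ℓ) (hnn ℓ _ _)
        rw [this] at hll; norm_num at hll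
      obtain ⟨s, rfl⟩ : ∃ s, n = s + 1 := ⟨n - 1, by have := ℓ₀.pos; omega⟩
      -- last row and last column of each R ℓ vanish off the corner
      have hzero : ∀ ℓ i j, T i j = 0 → R ℓ i j = 0 := by
        intro ℓ i j h0
        have : ∑ ℓ, R ℓ i j = 0 := by rw [← Matrix.sum_apply, ← hsum, h0]
        have := (Finset.sum_eq_zero_iff_of_nonneg
          (fun ℓ _ => hnn ℓ i j)).mp this ℓ (Finset.mem_univ ℓ)
        exact this
      have hrow : ∀ ℓ (j : Fin q), R ℓ (Fin.last p) j.castSucc = 0 := by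
        intro ℓ j
        apply hzero
        rw [hT]
        simp [Fin.val_last, j.isLt]
      have hcol : ∀ ℓ (i : Fin p), R ℓ i.castSucc (Fin.last q) = 0 := by
        intro ℓ i
        apply hzero
        rw [hT]
        simp [Fin.val_last, i.isLt]
      have hblock : ∀ (i : Fin p) (j : Fin q), R ℓ₀ i.castSucc j.castSucc = 0 := by
        intro i j
        obtain ⟨u', v', huv'⟩ := exists_of_rank_le_one' (R ℓ₀) (hrk ℓ₀)
        have minor : R ℓ₀ i.castSucc j.castSucc * R ℓ₀ (Fin.last p) (Fin.last q)
            = R ℓ₀ i.castSucc (Fin.last q) * R ℓ₀ (Fin.last p) j.castSucc := by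
          rw [huv']; simp only [Matrix.vecMulVec_apply]; ring
        rw [hcol, hrow, zero_mul] at minor
        exact (mul_eq_zero.mp minor).resolve_right (ne_of_gt hℓ₀)
      -- build a decomposition of T' of size s
      have hmem : s ∈ { r : ℕ | ∃ R : Fin r → Matrix (Fin p) (Fin q) ℝ,
          (∀ ℓ i j, 0 ≤ R ℓ i j) ∧ (∀ ℓ, (R ℓ).rank ≤ 1) ∧ T' = ∑ ℓ, R ℓ } := by
        refine ⟨fun k => (R (ℓ₀.succAbove k)).submatrix Fin.castSucc Fin.castSucc,
          fun k i j => hnn _ _ _, fun k => ?_, ?_⟩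
        · obtain ⟨u', v', huv'⟩ := exists_of_rank_le_one' (R (ℓ₀.succAbove k))
            (hrk (ℓ₀.succAbove k))
          have : (R (ℓ₀.succAbove k)).submatrix Fin.castSucc Fin.castSucc
              = Matrix.vecMulVec (u' ∘ Fin.castSucc) (v' ∘ Fin.castSucc) := by
            rw [huv']; rfl
          show ((R (ℓ₀.succAbove k)).submatrix Fin.castSucc Fin.castSucc).rank ≤ 1
          rw [this]; exact rank_vecMulVec_le' _ _
        · ext a b
          have h2 : T' a b = ∑ ℓ : Fin (s+1), R ℓ a.castSucc b.castSucc := by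
            have h3 := congrFun (congrFun hsum a.castSucc) b.castSucc
            rw [Matrix.sum_apply] at h3
            rw [← h3, hT]
            simp [a.isLt, b.isLt]
          rw [Matrix.sum_apply, h2,
            Fin.sum_univ_succAbove (fun ℓ => R ℓ a.castSucc b.castSucc) ℓ₀,
            hblock a b, zero_add]
          exact Finset.sum_congr rfl fun k _ => rfl
      have hle : nnegRank T' ≤ s := Nat.sInf_le hmem
      omega
    obtain ⟨R, hnn, hrk, hsum⟩ := Nat.sInf_mem hne
    exact main _ R hnn hrk hsum
  exact le_antisymm hub hlb
end

section
/- With S, T' and A as in the setup, assume additionally that every row of S contains at least one zero entry and that q ≥ 1. Then r₊(A) ≥ r₊(S) + r₊(T') + 1. -/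
/-- The `(m+p+1) × (n·(q+1))` matrix `A` of the setup, built from an `m × n` matrix `S` and a
`p × q` matrix `T'`: its column indexed by `(j, s)` is `(S_j ; t'_s ; 0)` for `s ≤ q`
(0-indexed: `s < q`) and `(S_j ; 0 ; 1)` for `s = q+1` (0-indexed: `s = q`). -/
def buildA {m n p q : ℕ} (S : Matrix (Fin m) (Fin n) ℝ) (T' : Matrix (Fin p) (Fin q) ℝ) :
    Matrix (Fin (m + p + 1)) (Fin n × Fin (q + 1)) ℝ :=
  fun i js =>
    if h1 : (i : ℕ) < m then S ⟨i, h1⟩ js.1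
    else if h2 : (i : ℕ) < m + p then
      (if h3 : (js.2 : ℕ) < q then T' ⟨(i : ℕ) - m, by omega⟩ ⟨js.2, h3⟩ else 0)
    else (if (js.2 : ℕ) < q then 0 else 1)

namespace Matrix

variable {α β : Type*}

theorem single_eq_vecMulVec {R : Type*} [MulZeroOneClass R] [DecidableEq α] [DecidableEq β]
    (i : α) (j : β) (c : R) : single i j c = vecMulVec (Pi.single i c) (Pi.single j 1) := by
  ext x y
  simp only [single_apply, vecMulVec_apply, Pi.single_apply]
  split_ifs <;> simp_all

variable {K : Type*} [Field K] [Fintype β]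

theorem exists_eq_vecMulVec_of_rank_le_one {M : Matrix α β K} (hM : M.rank ≤ 1) :
    ∃ u v, M = vecMulVec u v := by
  classical
  obtain ⟨u, hu⟩ := finrank_le_one_iff.mp hM
  have hcol : ∀ y, ∃ c : K, c • (u : α → K) = M.col y := fun y => by
    obtain ⟨c, hc⟩ := hu ⟨M.col y, Pi.single y 1, M.mulVec_single_one y⟩
    exact ⟨c, congrArg Subtype.val hc⟩
  choose v hv using hcol
  refine ⟨u, v, ext fun x y => ?_⟩
  simpa [vecMulVec_apply, mul_comm] using (congrFun (hv y) x).symm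

variable {M : Matrix α β K} {x x' : α} {y y' : β}

theorem apply_eq_zero_of_rank_le_one_of_row (hM : M.rank ≤ 1) (hne : M x' y' ≠ 0)
    (hx : M x y' = 0) (y : β) : M x y = 0 := by
  obtain ⟨u, v, rfl⟩ := exists_eq_vecMulVec_of_rank_le_one hM
  simp only [vecMulVec_apply, mul_eq_zero, ne_eq, not_or] at *
  tauto

theorem apply_eq_zero_of_rank_le_one_of_col (hM : M.rank ≤ 1) (hne : M x' y' ≠ 0)
    (hy : M x' y = 0) (x : α) : M x y = 0 := by
  obtain ⟨u, v, rfl⟩ := exists_eq_vecMulVec_of_rank_le_one hM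
  simp only [vecMulVec_apply, mul_eq_zero, ne_eq, not_or] at *
  tauto

end Matrix

section NonnegRank

variable {α β ι : Type*} [Fintype ι]

theorem exists_fin_decomposition [Fintype β] {M : Matrix α β ℝ} (R : ι → Matrix α β ℝ)
    (h0 : ∀ ℓ i j, 0 ≤ R ℓ i j) (h1 : ∀ ℓ, (R ℓ).rank ≤ 1) (hM : M = ∑ ℓ, R ℓ) :
    ∃ R' : Fin (Fintype.card ι) → Matrix α β ℝ,
      (∀ ℓ i j, 0 ≤ R' ℓ i j) ∧ (∀ ℓ, (R' ℓ).rank ≤ 1) ∧ M = ∑ ℓ, R' ℓ :=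
  ⟨R ∘ (Fintype.equivFin ι).symm, fun _ => h0 _, fun _ => h1 _,
    hM.trans (Equiv.sum_comp _ R).symm⟩

theorem nnegRank_le_card [Fintype α] [Fintype β] {M : Matrix α β ℝ} (R : ι → Matrix α β ℝ)
    (h0 : ∀ ℓ i j, 0 ≤ R ℓ i j) (h1 : ∀ ℓ, (R ℓ).rank ≤ 1) (hM : M = ∑ ℓ, R ℓ) :
    nnegRank M ≤ Fintype.card ι :=
  Nat.sInf_le (exists_fin_decomposition R h0 h1 hM)

theorem exists_nnegRank_decomposition [Fintype α] [Fintype β] {M : Matrix α β ℝ}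
    (hM : ∀ i j, 0 ≤ M i j) :
    ∃ R : Fin (nnegRank M) → Matrix α β ℝ,
      (∀ ℓ i j, 0 ≤ R ℓ i j) ∧ (∀ ℓ, (R ℓ).rank ≤ 1) ∧ M = ∑ ℓ, R ℓ := by
  classical
  refine Nat.sInf_mem (s := {r : ℕ | ∃ R : Fin r → Matrix α β ℝ,
      (∀ ℓ i j, 0 ≤ R ℓ i j) ∧ (∀ ℓ, (R ℓ).rank ≤ 1) ∧ M = ∑ ℓ, R ℓ})
    ⟨_, exists_fin_decomposition (fun p : α × β => Matrix.single p.1 p.2 (M p.1 p.2))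
      (fun p i j => ?_) (fun p => ?_) ?_⟩
  · by_cases h : p.1 = i ∧ p.2 = j <;> simp [h, hM]
  · rw [Matrix.single_eq_vecMulVec]
    exact Matrix.rank_vecMulVec_le _ _
  · rw [Fintype.sum_prod_type]
    exact Matrix.matrix_eq_sum_single M

theorem nnegRank_submatrix_le_card [Fintype β] {α' β' : Type*} [Fintype α'] [Fintype β']
    (R : ι → Matrix α β ℝ) (h0 : ∀ ℓ i j, 0 ≤ R ℓ i j) (h1 : ∀ ℓ, (R ℓ).rank ≤ 1)
    (f : α' → α) (g : β' → β) (t : Finset ι) (ht : ∀ ℓ ∉ t, (R ℓ).submatrix f g = 0) :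
    nnegRank ((∑ ℓ, R ℓ).submatrix f g) ≤ t.card := by
  rw [← Fintype.card_coe]
  refine nnegRank_le_card (fun ℓ : t => (R ℓ).submatrix f g) (fun _ _ _ => h0 _ _ _)
    (fun _ => (Matrix.rank_submatrix_le _ _ _).trans (h1 _)) ?_
  rw [Finset.sum_coe_sort t (fun ℓ => (R ℓ).submatrix f g),
    Finset.sum_subset t.subset_univ fun ℓ _ h => ht ℓ h]
  ext; simp [Matrix.sum_apply]

theorem apply_eq_zero_of_sum_apply_eq_zero (R : ι → Matrix α β ℝ) (h0 : ∀ ℓ i j, 0 ≤ R ℓ i j)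
    {x : α} {y : β} (h : (∑ ℓ, R ℓ) x y = 0) (ℓ : ι) : R ℓ x y = 0 := by
  rw [Matrix.sum_apply] at h
  exact (Finset.sum_eq_zero_iff_of_nonneg fun ℓ _ => h0 ℓ x y).mp h ℓ (Finset.mem_univ ℓ)

end NonnegRank

section buildA

variable {m n p q : ℕ} (S : Matrix (Fin m) (Fin n) ℝ) (T' : Matrix (Fin p) (Fin q) ℝ)

theorem buildA_top (i : Fin m) (js : Fin n × Fin (q + 1)) :
    buildA S T' (i.castAdd p).castSucc js = S i js.1 := by
  simp [buildA]

theorem buildA_mid_castSucc (i : Fin p) (j : Fin n) (s : Fin q) :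
    buildA S T' (i.natAdd m).castSucc (j, s.castSucc) = T' i s := by
  simp [buildA]

theorem buildA_mid_last (i : Fin p) (j : Fin n) :
    buildA S T' (i.natAdd m).castSucc (j, Fin.last q) = 0 := by
  simp [buildA]

theorem buildA_last_castSucc (j : Fin n) (s : Fin q) :
    buildA S T' (Fin.last (m + p)) (j, s.castSucc) = 0 := by
  simp [buildA]

theorem buildA_last_last (j : Fin n) :
    buildA S T' (Fin.last (m + p)) (j, Fin.last q) = 1 := by
  simp [buildA]

theorem buildA_nonneg (hS : ∀ i j, 0 ≤ S i j) (hT' : ∀ i j, 0 ≤ T' i j)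
    (x : Fin (m + p + 1)) (y : Fin n × Fin (q + 1)) :
    0 ≤ buildA S T' x y := by
  unfold buildA
  split_ifs <;> first | exact hS _ _ | exact hT' _ _ | norm_num

theorem submatrix_buildA_top (c : Fin n → Fin (q + 1)) :
    (buildA S T').submatrix (fun i => (i.castAdd p).castSucc) (fun j => (j, c j)) = S :=
  Matrix.ext fun i j => buildA_top S T' i (j, c j)

theorem submatrix_buildA_mid (g : Fin q → Fin n) :
    (buildA S T').submatrix (fun i => (i.natAdd m).castSucc) (fun s => (g s, s.castSucc)) = T' :=
  Matrix.ext fun i s => buildA_mid_castSucc S T' i (g s) s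

end buildA

section Factorization

variable {ι : Type*} [Fintype ι] {m n p q : ℕ}
  {S : Matrix (Fin m) (Fin n) ℝ} {T' : Matrix (Fin p) (Fin q) ℝ}
  {R : ι → Matrix (Fin (m + p + 1)) (Fin n × Fin (q + 1)) ℝ}

open Classical in
noncomputable def midSupport (R : ι → Matrix (Fin (m + p + 1)) (Fin n × Fin (q + 1)) ℝ) :
    Finset ι :=
  {ℓ | ∃ (i : Fin p) (j : Fin n) (s : Fin q), R ℓ (i.natAdd m).castSucc (j, s.castSucc) ≠ 0}

theorem mem_midSupport {ℓ : ι} :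
    ℓ ∈ midSupport R ↔
      ∃ (i : Fin p) (j : Fin n) (s : Fin q), R ℓ (i.natAdd m).castSucc (j, s.castSucc) ≠ 0 := by
  simp [midSupport]

theorem factor_eq_zero_of_buildA_eq_zero (hR0 : ∀ ℓ i j, 0 ≤ R ℓ i j)
    (hR : buildA S T' = ∑ ℓ, R ℓ) {x y} (h : buildA S T' x y = 0) (ℓ : ι) : R ℓ x y = 0 :=
  apply_eq_zero_of_sum_apply_eq_zero R hR0 (hR ▸ h) ℓ

theorem factor_last_col_eq_zero (hR0 : ∀ ℓ i j, 0 ≤ R ℓ i j) (hR1 : ∀ ℓ, (R ℓ).rank ≤ 1)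
    (hR : buildA S T' = ∑ ℓ, R ℓ) {ℓ : ι} (hℓ : ℓ ∈ midSupport R) (x : Fin (m + p + 1))
    (j : Fin n) : R ℓ x (j, Fin.last q) = 0 := by
  obtain ⟨i, j', s, hne⟩ := mem_midSupport.mp hℓ
  exact Matrix.apply_eq_zero_of_rank_le_one_of_col (hR1 ℓ) hne
    (factor_eq_zero_of_buildA_eq_zero hR0 hR (buildA_mid_last S T' i j) ℓ) x

theorem factor_castSucc_col_eq_zero (hR0 : ∀ ℓ i j, 0 ≤ R ℓ i j) (hR1 : ∀ ℓ, (R ℓ).rank ≤ 1)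
    (hR : buildA S T' = ∑ ℓ, R ℓ) {ℓ : ι} {j : Fin n}
    (hne : R ℓ (Fin.last (m + p)) (j, Fin.last q) ≠ 0) (x : Fin (m + p + 1)) (j' : Fin n)
    (s : Fin q) : R ℓ x (j', s.castSucc) = 0 :=
  Matrix.apply_eq_zero_of_rank_le_one_of_col (hR1 ℓ) hne
    (factor_eq_zero_of_buildA_eq_zero hR0 hR (buildA_last_castSucc S T' j' s) ℓ) x

theorem factor_top_eq_zero (hR0 : ∀ ℓ i j, 0 ≤ R ℓ i j) (hR1 : ∀ ℓ, (R ℓ).rank ≤ 1)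
    (hR : buildA S T' = ∑ ℓ, R ℓ) (hrow : ∀ i, ∃ j, S i j = 0) {ℓ : ι} {s : Fin q}
    (hcover : ∀ j, ∃ i : Fin p, R ℓ (i.natAdd m).castSucc (j, s.castSucc) ≠ 0) (i : Fin m)
    (y : Fin n × Fin (q + 1)) : R ℓ (i.castAdd p).castSucc y = 0 := by
  obtain ⟨j, hj⟩ := hrow i
  obtain ⟨i', hi'⟩ := hcover j
  refine Matrix.apply_eq_zero_of_rank_le_one_of_row (hR1 ℓ) hi' ?_ y
  exact factor_eq_zero_of_buildA_eq_zero hR0 hR ((buildA_top S T' i _).trans hj) ℓ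

theorem nnegRank_add_lt_card_of_exists_gap (hR0 : ∀ ℓ i j, 0 ≤ R ℓ i j)
    (hR1 : ∀ ℓ, (R ℓ).rank ≤ 1) (hR : buildA S T' = ∑ ℓ, R ℓ) {ℓ₀ : ι}
    (hℓ₀ : ℓ₀ ∈ midSupport R)
    (hgap : ∀ s : Fin q, ∃ j, ∀ i : Fin p, R ℓ₀ (i.natAdd m).castSucc (j, s.castSucc) = 0) :
    nnegRank S + nnegRank T' < Fintype.card ι := by
  classical
  choose g hg using hgap
  have hT : nnegRank T' ≤ ((midSupport R).erase ℓ₀).card := by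
    have := nnegRank_submatrix_le_card R hR0 hR1 (fun i : Fin p => (i.natAdd m).castSucc)
      (fun s : Fin q => (g s, s.castSucc)) ((midSupport R).erase ℓ₀)
      fun ℓ hℓ => Matrix.ext fun i s => ?_
    · rwa [← hR, submatrix_buildA_mid] at this
    by_cases h : ℓ = ℓ₀
    · exact h ▸ hg s i
    · have : ℓ ∉ midSupport R := fun h' => hℓ (Finset.mem_erase.mpr ⟨h, h'⟩)
      simp only [mem_midSupport, not_exists, not_not] at this
      exact this i (g s) s
  have hS : nnegRank S ≤ (midSupport R)ᶜ.card := by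
    have := nnegRank_submatrix_le_card R hR0 hR1 (fun i : Fin m => (i.castAdd p).castSucc)
      (fun j : Fin n => (j, Fin.last q)) (midSupport R)ᶜ fun ℓ hℓ => Matrix.ext fun i j =>
        factor_last_col_eq_zero hR0 hR1 hR (Finset.mem_compl.not_left.mp hℓ) _ j
    rwa [← hR, submatrix_buildA_top] at this
  have := Finset.card_erase_add_one hℓ₀
  have := Finset.card_compl_add_card (midSupport R)
  omega

theorem nnegRank_add_lt_card_of_forall_cover (hR0 : ∀ ℓ i j, 0 ≤ R ℓ i j)
    (hR1 : ∀ ℓ, (R ℓ).rank ≤ 1) (hR : buildA S T' = ∑ ℓ, R ℓ) (hrow : ∀ i, ∃ j, S i j = 0)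
    (j₀ : Fin n) (s₀ : Fin q)
    (hcover : ∀ ℓ ∈ midSupport R,
      ∃ s : Fin q, ∀ j, ∃ i : Fin p, R ℓ (i.natAdd m).castSucc (j, s.castSucc) ≠ 0) :
    nnegRank S + nnegRank T' < Fintype.card ι := by
  classical
  set B := midSupport R
  set C : Finset ι := {ℓ | R ℓ (Fin.last (m + p)) (j₀, Fin.last q) ≠ 0} with hC
  have hCne : C.Nonempty := by
    obtain ⟨ℓ, -, hℓ⟩ := Finset.exists_ne_zero_of_sum_ne_zero (s := Finset.univ)
      (f := fun ℓ => R ℓ (Fin.last (m + p)) (j₀, Fin.last q)) (by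
        rw [← Matrix.sum_apply, ← hR, buildA_last_last]; exact one_ne_zero)
    exact ⟨ℓ, by simpa [hC] using hℓ⟩
  have hBC : Disjoint B C := Finset.disjoint_left.mpr fun ℓ hℓB hℓC =>
    (Finset.mem_filter.mp hℓC).2 (factor_last_col_eq_zero hR0 hR1 hR hℓB _ j₀)
  have hT : nnegRank T' ≤ B.card := by
    have := nnegRank_submatrix_le_card R hR0 hR1 (fun i : Fin p => (i.natAdd m).castSucc)
      (fun s : Fin q => (j₀, s.castSucc)) B fun ℓ hℓ => Matrix.ext fun i s => ?_
    · rwa [← hR, submatrix_buildA_mid S T' fun _ => j₀] at this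
    simp only [B, mem_midSupport, not_exists, not_not] at hℓ
    exact hℓ i j₀ s
  have hS : nnegRank S ≤ (B ∪ C)ᶜ.card := by
    have := nnegRank_submatrix_le_card R hR0 hR1 (fun i : Fin m => (i.castAdd p).castSucc)
      (fun j : Fin n => (j, s₀.castSucc)) (B ∪ C)ᶜ fun ℓ hℓ => Matrix.ext fun i j => ?_
    · rwa [← hR, submatrix_buildA_top] at this
    rcases Finset.mem_union.mp (Finset.mem_compl.not_left.mp hℓ) with hℓB | hℓC
    · obtain ⟨s, hs⟩ := hcover ℓ hℓB
      exact factor_top_eq_zero hR0 hR1 hR hrow hs i _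
    · exact factor_castSucc_col_eq_zero hR0 hR1 hR (Finset.mem_filter.mp hℓC).2 _ j s₀
  have := Finset.card_union_of_disjoint hBC
  have := Finset.card_compl_add_card (B ∪ C)
  have := hCne.card_pos
  omega

end Factorization

/-- With `S`, `T'`, `A` as in the setup, if every row of `S` contains a zero entry and
`q ≥ 1` (and `n ≥ 1`, as is implicit in the setup coming from a nonempty polytope),
then `r₊(A) ≥ r₊(S) + r₊(T') + 1`. -/
theorem nnegRank_buildA_ge {m n p q : ℕ}
    (S : Matrix (Fin m) (Fin n) ℝ) (T' : Matrix (Fin p) (Fin q) ℝ)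
    (hS : ∀ i j, 0 ≤ S i j) (hT' : ∀ i j, 0 ≤ T' i j)
    (hrow : ∀ i, ∃ j, S i j = 0) (hq : 1 ≤ q) (hn : 1 ≤ n) :
    nnegRank S + nnegRank T' + 1 ≤ nnegRank (buildA S T') := by
  obtain ⟨R, hR0, hR1, hR⟩ := exists_nnegRank_decomposition (buildA_nonneg S T' hS hT')
  rw [← Fintype.card_fin (nnegRank (buildA S T'))]
  by_cases hgap : ∃ ℓ ∈ midSupport R,
      ∀ s : Fin q, ∃ j, ∀ i : Fin p, R ℓ (i.natAdd m).castSucc (j, s.castSucc) = 0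
  · obtain ⟨ℓ, hℓ, hgap⟩ := hgap
    exact nnegRank_add_lt_card_of_exists_gap hR0 hR1 hR hℓ hgap
  · push Not at hgap
    exact nnegRank_add_lt_card_of_forall_cover hR0 hR1 hR hrow ⟨0, hn⟩ ⟨0, hq⟩ hgap
end

section
/- With S, T' and A as in the setup, assume additionally that every row of S contains at least one zero entry. Suppose A = Σ_{ℓ ∈ L} R^ℓ where L is a finite index set, each R^ℓ is a nonnegative matrix of rank at most one, and |L| ≤ r₊(S) + r₊(T'). Let L' ⊆ L be the set of ℓ such that R^ℓ has a nonzero entry in some position (i,(j,s)) with m < i ≤ m+p and s ≤ q. Then no ℓ ∈ L' is such that R^ℓ has a nonzero entry in a green position, i.e., for every ℓ ∈ L', every i ≤ m, every j ∈ {1,…,n} and every s ≤ q, the entry of R^ℓ at position (i,(j,s)) is zero. -/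
section Aux

open Module Submodule Matrix

lemma rank_le_one_factor {α β : Type*} [Fintype α] [Fintype β] {M : Matrix α β ℝ}
    (h : M.rank ≤ 1) : ∃ (u : α → ℝ) (v : β → ℝ), ∀ i j, M i j = u i * v j := by
  rw [Matrix.rank_eq_finrank_span_cols] at h
  obtain ⟨w₀, hw₀⟩ := finrank_le_one_iff.mp h
  have hcol : ∀ j : β, ∃ c : ℝ, c • (w₀ : α → ℝ) = M.transpose j := by
    intro j
    obtain ⟨c, hc⟩ := hw₀ ⟨M.transpose j, Submodule.subset_span ⟨j, rfl⟩⟩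
    exact ⟨c, congrArg Subtype.val hc⟩
  choose c hc using hcol
  refine ⟨fun i => (w₀ : α → ℝ) i, c, fun i j => ?_⟩
  have := congrFun (hc j) i
  simp only [Pi.smul_apply, smul_eq_mul] at this
  rw [show M i j = M.transpose j i from rfl, ← this]; ring

lemma rank_outer_le_one {α β : Type*} [Fintype α] [Fintype β] (u : α → ℝ) (v : β → ℝ) :
    (Matrix.of fun i j => u i * v j : Matrix α β ℝ).rank ≤ 1 := by
  rw [Matrix.rank_eq_finrank_span_cols]
  have hle : Submodule.span ℝ (Set.range (Matrix.of fun i j => u i * v j : Matrix α β ℝ).transpose)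
      ≤ Submodule.span ℝ {u} := by
    rw [Submodule.span_le]
    rintro _ ⟨j, rfl⟩
    exact Submodule.mem_span_singleton.mpr ⟨v j, by funext i; simp [Matrix.transpose, mul_comm]⟩
  refine le_trans (Submodule.finrank_mono hle) ?_
  exact (Submodule.finrank_le_one_iff_isPrincipal _).mpr ⟨u, rfl⟩

lemma minor_eq {α β : Type*} [Fintype α] [Fintype β] {M : Matrix α β ℝ}
    (h : M.rank ≤ 1) (a c : α) (b d : β) : M a b * M c d = M a d * M c b := by
  obtain ⟨u, v, huv⟩ := rank_le_one_factor h
  simp only [huv]; ring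

lemma rank_submatrix_le_one {α β α' β' : Type*} [Fintype α] [Fintype β] [Fintype α'] [Fintype β']
    {M : Matrix α β ℝ} (h : M.rank ≤ 1) (f : α' → α) (g : β' → β) :
    (M.submatrix f g).rank ≤ 1 := by
  obtain ⟨u, v, huv⟩ := rank_le_one_factor h
  have : M.submatrix f g = Matrix.of fun i j => u (f i) * v (g j) := by
    ext i j; simp [Matrix.submatrix, huv]
  rw [this]; exact rank_outer_le_one _ _

lemma nnegRank_le_finset {α β : Type*} [Fintype α] [Fintype β] (M : Matrix α β ℝ)
    {L : Type*} [Fintype L] (t : Finset L) (R : L → Matrix α β ℝ)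
    (hpos : ∀ ℓ i j, 0 ≤ R ℓ i j) (hrank : ∀ ℓ, (R ℓ).rank ≤ 1)
    (hsum : M = ∑ ℓ ∈ t, R ℓ) : nnegRank M ≤ t.card := by
  apply Nat.sInf_le
  refine ⟨fun k => R (t.equivFin.symm k).1, fun k i j => hpos _ i j, fun k => hrank _, ?_⟩
  rw [hsum, ← Finset.sum_coe_sort t R]
  exact (Equiv.sum_comp t.equivFin.symm (fun x => R x.1)).symm

end Aux

/-- Claim 4: assume every row of `S` contains a zero entry. Given a decomposition
`A = Σ_{ℓ ∈ L} R^ℓ` into nonnegative rank-at-most-one matrices with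
`|L| ≤ r₊(S) + r₊(T')`, no `ℓ` in `L'` (the set of `ℓ` whose matrix has support in a red
position, i.e. row `i` with `m ≤ i < m+p` (0-indexed) and column `(j,s)` with `s < q`)
has support in a green position: for all `i < m`, `j` and `s < q` (0-indexed), the entry of
`R^ℓ` at `(i, (j, s))` is zero. -/
theorem claim4 {m n p q : ℕ}
    (S : Matrix (Fin m) (Fin n) ℝ) (T' : Matrix (Fin p) (Fin q) ℝ)
    (hS : ∀ i j, 0 ≤ S i j) (hT' : ∀ i j, 0 ≤ T' i j)
    (hrow : ∀ i, ∃ j, S i j = 0)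
    {L : Type*} [Fintype L] (R : L → Matrix (Fin (m + p + 1)) (Fin n × Fin (q + 1)) ℝ)
    (hpos : ∀ ℓ i js, 0 ≤ R ℓ i js) (hrank : ∀ ℓ, (R ℓ).rank ≤ 1)
    (hsum : buildA S T' = ∑ ℓ, R ℓ)
    (hcard : Fintype.card L ≤ nnegRank S + nnegRank T') :
    ∀ ℓ : L,
      (∃ (i : Fin (m + p + 1)) (j : Fin n) (s : Fin (q + 1)),
        m ≤ (i : ℕ) ∧ (i : ℕ) < m + p ∧ (s : ℕ) < q ∧ R ℓ i (j, s) ≠ 0) →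
      ∀ (i : Fin (m + p + 1)) (j : Fin n) (s : Fin (q + 1)),
        (i : ℕ) < m → (s : ℕ) < q → R ℓ i (j, s) = 0 := by
  classical
  intro ℓ₀ hred i₁ j₁ s₁ hi₁ hs₁
  by_contra hgreen
  have hpt : ∀ i js, buildA S T' i js = ∑ ℓ, R ℓ i js := by
    intro i js; rw [hsum]; simp [Matrix.sum_apply]
  have hforce : ∀ i js, buildA S T' i js = 0 → ∀ ℓ, R ℓ i js = 0 := by
    intro i js h0 ℓ
    have hsz : ∑ ℓ' : L, R ℓ' i js = 0 := by rw [← hpt, h0]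
    exact (Finset.sum_eq_zero_iff_of_nonneg (fun ℓ' _ => hpos ℓ' i js)).mp hsz ℓ
      (Finset.mem_univ ℓ)
  set P : L → Prop := fun ℓ => ∃ (i : Fin (m+p+1)) (j : Fin n) (s : Fin (q+1)),
      m ≤ (i:ℕ) ∧ (i:ℕ) < m + p ∧ (s:ℕ) < q ∧ R ℓ i (j, s) ≠ 0 with hPdef
  set Lset : Finset L := Finset.univ.filter P with hLdef
  have hmemL : ∀ ℓ, ℓ ∈ Lset ↔ P ℓ := fun ℓ => by simp [hLdef]
  have hℓ₀ : ℓ₀ ∈ Lset := (hmemL ℓ₀).mpr hred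
  -- Step A: matrices in `Lset` vanish on all columns `(j, q)`.
  have stepA : ∀ ℓ ∈ Lset, ∀ (i : Fin (m+p+1)) (j : Fin n), R ℓ i (j, Fin.last q) = 0 := by
    intro ℓ hℓ i j
    obtain ⟨ia, ja, sa, hma, hmpa, hsa, hna⟩ := (hmemL ℓ).mp hℓ
    have hb : buildA S T' ia (j, Fin.last q) = 0 := by
      unfold buildA
      rw [dif_neg (by omega), dif_pos (by omega), dif_neg (by simp)]
    have hz : R ℓ ia (j, Fin.last q) = 0 := hforce _ _ hb ℓ
    have hminor := minor_eq (hrank ℓ) i ia (j, Fin.last q) (ja, sa)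
    rw [hz, mul_zero] at hminor
    rcases mul_eq_zero.mp hminor with h | h
    · exact h
    · exact absurd h hna
  -- Step B: `S` decomposes over the complement of `Lset`.
  have hSdec : S = ∑ ℓ ∈ Lsetᶜ, (R ℓ).submatrix
      (fun i : Fin m => (Fin.castAdd p i).castSucc) (fun j : Fin n => (j, Fin.last q)) := by
    ext i j
    have hb : buildA S T' ((Fin.castAdd p i).castSucc) (j, Fin.last q) = S i j := by
      unfold buildA
      rw [dif_pos (show (((Fin.castAdd p i).castSucc : Fin (m+p+1)) : ℕ) < m by simp)]
      have ha : (⟨(((Fin.castAdd p i).castSucc : Fin (m+p+1)) : ℕ), by simp⟩ : Fin m) = i :=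
        Fin.ext (by simp)
      rw [ha]
    calc S i j = buildA S T' ((Fin.castAdd p i).castSucc) (j, Fin.last q) := hb.symm
      _ = ∑ ℓ, R ℓ ((Fin.castAdd p i).castSucc) (j, Fin.last q) := hpt _ _
      _ = ∑ ℓ ∈ Lsetᶜ, R ℓ ((Fin.castAdd p i).castSucc) (j, Fin.last q) := by
          refine (Finset.sum_subset (Finset.subset_univ _) ?_).symm
          intro x _ hx
          have hxL : x ∈ Lset := by
            by_contra hxc
            exact hx (Finset.mem_compl.mpr hxc)
          exact stepA x hxL _ j
      _ = (∑ ℓ ∈ Lsetᶜ, (R ℓ).submatrix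
            (fun i : Fin m => (Fin.castAdd p i).castSucc)
            (fun j : Fin n => (j, Fin.last q))) i j := by
          simp [Matrix.sum_apply, Matrix.submatrix_apply]
  have hScard : nnegRank S ≤ Lsetᶜ.card :=
    nnegRank_le_finset S _ _ (fun ℓ i j => hpos ℓ _ _)
      (fun ℓ => rank_submatrix_le_one (hrank ℓ) _ _) hSdec
  -- Step C: the zero row of `S` kills column block `jstar` of `R ℓ₀`.
  obtain ⟨jstar, hjstar⟩ := hrow ⟨i₁, hi₁⟩
  have hz1 : ∀ s' : Fin q, R ℓ₀ i₁ (jstar, s'.castSucc) = 0 := by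
    intro s'
    apply hforce
    unfold buildA
    rw [dif_pos hi₁]
    exact hjstar
  have hz2 : ∀ (i : Fin p) (s : Fin q),
      R ℓ₀ ((Fin.natAdd m i).castSucc) (jstar, s.castSucc) = 0 := by
    intro i s
    have hminor := minor_eq (hrank ℓ₀) ((Fin.natAdd m i).castSucc) i₁
      (jstar, s.castSucc) (j₁, s₁)
    rw [hz1 s, mul_zero] at hminor
    rcases mul_eq_zero.mp hminor with h | h
    · exact h
    · exact absurd h hgreen
  -- Step D: `T'` decomposes over `Lset.erase ℓ₀`.
  have hTdec : T' = ∑ ℓ ∈ Lset.erase ℓ₀, (R ℓ).submatrix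
      (fun i : Fin p => (Fin.natAdd m i).castSucc) (fun s : Fin q => (jstar, s.castSucc)) := by
    ext i s
    have hb : buildA S T' ((Fin.natAdd m i).castSucc) (jstar, s.castSucc) = T' i s := by
      unfold buildA
      rw [dif_neg (show ¬ (((Fin.natAdd m i).castSucc : Fin (m+p+1)) : ℕ) < m by simp),
        dif_pos (show (((Fin.natAdd m i).castSucc : Fin (m+p+1)) : ℕ) < m + p by simp),
        dif_pos (show ((jstar, s.castSucc).2 : ℕ) < q by simp)]
      have h1 : (⟨(((Fin.natAdd m i).castSucc : Fin (m+p+1)) : ℕ) - m, by simp⟩ : Fin p) = i :=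
        Fin.ext (by simp)
      have h2 : (⟨(((jstar, s.castSucc).2 : Fin (q+1)) : ℕ), by simp⟩ : Fin q) = s :=
        Fin.ext (by simp)
      rw [h1, h2]
    calc T' i s = buildA S T' ((Fin.natAdd m i).castSucc) (jstar, s.castSucc) := hb.symm
      _ = ∑ ℓ, R ℓ ((Fin.natAdd m i).castSucc) (jstar, s.castSucc) := hpt _ _
      _ = ∑ ℓ ∈ Lset.erase ℓ₀, R ℓ ((Fin.natAdd m i).castSucc) (jstar, s.castSucc) := by
          refine (Finset.sum_subset (Finset.subset_univ _) ?_).symm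
          intro x _ hx
          by_cases hx0 : x = ℓ₀
          · subst hx0; exact hz2 i s
          · have hxP : ¬ P x := by
              intro hp
              exact hx (Finset.mem_erase.mpr ⟨hx0, (hmemL x).mpr hp⟩)
            by_contra hne
            exact hxP ⟨(Fin.natAdd m i).castSucc, jstar, s.castSucc,
              by simp, by simp, by simp, hne⟩
      _ = (∑ ℓ ∈ Lset.erase ℓ₀, (R ℓ).submatrix
            (fun i : Fin p => (Fin.natAdd m i).castSucc)
            (fun s : Fin q => (jstar, s.castSucc))) i s := by
          simp [Matrix.sum_apply, Matrix.submatrix_apply]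
  have hTcard : nnegRank T' ≤ (Lset.erase ℓ₀).card :=
    nnegRank_le_finset T' _ _ (fun ℓ i j => hpos ℓ _ _)
      (fun ℓ => rank_submatrix_le_one (hrank ℓ) _ _) hTdec
  -- Step E: counting contradiction.
  have e1 : (Lset.erase ℓ₀).card = Lset.card - 1 := Finset.card_erase_of_mem hℓ₀
  have e2 : Lsetᶜ.card = Fintype.card L - Lset.card := Finset.card_compl Lset
  have e3 : 1 ≤ Lset.card := Finset.card_pos.mpr ⟨ℓ₀, hℓ₀⟩
  have e4 : Lset.card ≤ Fintype.card L := Finset.card_le_univ Lset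
  omega
end
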